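/- For every integer g ≥ 5, the minimum number of vertices of a (1,2,g)-graph is exactly 2g; that is, there exists a (1,2,g)-graph on 2g vertices and every (1,2,g)-graph has at least 2g vertices. -/
import Mathlib


/-- A mixed graph: a set of undirected edges (a symmetric irreflexive relation)
together with a set of directed arcs (an irreflexive relation), with no loops.
Since edges and arcs are given by relations, there are no repeated edges or arcs. -/
structure MixedGraph (V : Type*) where
  Edge : V → V → Prop
  Arc : V → V → Prop
  edge_symm : ∀ {u v}, Edge u v → Edge v u
  edge_irrefl : ∀ v, ¬ Edge v v
  arc_irrefl : ∀ v, ¬ Arc v v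

/-- A cycle of length `len ≥ 1` in a mixed graph: a cyclic sequence of vertices
`vert : ZMod len → V` where each consecutive pair `(vert i, vert (i+1))` is joined
either by an arc from `vert i` to `vert (i+1)` (when `useArc i = true`) or by an
undirected edge (when `useArc i = false`), and no edge or arc is used more than once. -/
structure MixedCycle {V : Type*} (G : MixedGraph V) where
  len : ℕ
  len_pos : 0 < len
  vert : ZMod len → V
  useArc : ZMod len → Bool
  step_arc : ∀ i, useArc i = true → G.Arc (vert i) (vert (i + 1))
  step_edge : ∀ i, useArc i = false → G.Edge (vert i) (vert (i + 1))
  arc_once : ∀ i j, useArc i = true → useArc j = true →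
    vert i = vert j → vert (i + 1) = vert (j + 1) → i = j
  edge_once : ∀ i j, useArc i = false → useArc j = false →
    ((vert i = vert j ∧ vert (i + 1) = vert (j + 1)) ∨
      (vert i = vert (j + 1) ∧ vert (i + 1) = vert j)) → i = j

/-- A mixed graph has girth `g` if it has a cycle of length `g` and no shorter cycle. -/
def MixedGraph.HasGirth {V : Type*} (G : MixedGraph V) (g : ℕ) : Prop :=
  (∃ c : MixedCycle G, c.len = g) ∧ ∀ c : MixedCycle G, g ≤ c.len

/-- An `(r,z,g)`-graph: every vertex is incident with exactly `r` undirected edges,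
every vertex has out-degree exactly `z`, and the girth is `g`. -/
def IsMixedRZG {V : Type*} (G : MixedGraph V) (r z g : ℕ) : Prop :=
  (∀ v, Nat.card {u | G.Edge v u} = r) ∧
  (∀ v, Nat.card {u | G.Arc v u} = z) ∧
  G.HasGirth g

-- helper: val injectivity
lemma val_cast_inj {L : ℕ} [NeZero L] {a b : ℕ} (ha : a < L) (hb : b < L)
    (h : (a : ZMod L) = b) : a = b := by
  have := congrArg ZMod.val h
  rwa [ZMod.val_natCast, ZMod.val_natCast, Nat.mod_eq_of_lt ha, Nat.mod_eq_of_lt hb] at this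

lemma zmod_succ_val {n : ℕ} [NeZero n] (k : ZMod n) : (k + 1).val = (k.val + 1) % n := by
  conv_lhs => rw [← ZMod.natCast_rightInverse k]
  rw [← Nat.cast_one, ← Nat.cast_add, ZMod.val_natCast]

lemma even_card_of_involutive {α : Type*} [Fintype α] [DecidableEq α] (f : α → α)
    (h2 : ∀ a, f (f a) = a) (hne : ∀ a, f a ≠ a) : Even (Fintype.card α) := by
  have key : ∀ s : Finset α, (∀ a ∈ s, f a ∈ s) → Even s.card := by
    intro s
    induction s using Finset.strongInduction with
    | _ s ih =>
      intro hcl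
      rcases s.eq_empty_or_nonempty with rfl | ⟨a, ha⟩
      · simp
      · have hfa := hcl a ha
        have hane : a ≠ f a := Ne.symm (hne a)
        have hsubset : ({a, f a} : Finset α) ⊆ s := by
          intro x hx
          simp only [Finset.mem_insert, Finset.mem_singleton] at hx
          rcases hx with rfl | rfl
          · exact ha
          · exact hfa
        have hlt : s \ {a, f a} ⊂ s :=
          Finset.sdiff_ssubset hsubset ⟨a, by simp⟩
        have hcl' : ∀ b ∈ s \ {a, f a}, f b ∈ s \ {a, f a} := by
          intro b hb
          simp only [Finset.mem_sdiff, Finset.mem_insert, Finset.mem_singleton] at hb ⊢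
          refine ⟨hcl b hb.1, ?_⟩
          rintro (h | h)
          · apply hb.2
            right
            rw [← h2 b, h]
          · apply hb.2
            left
            have := congrArg f h
            rwa [h2, h2] at this
        have hev := ih _ hlt hcl'
        have hcard2 : ({a, f a} : Finset α).card = 2 := Finset.card_pair hane
        have hle : ({a, f a} : Finset α).card ≤ s.card := Finset.card_le_card hsubset
        have hcard : s.card = (s \ {a, f a}).card + 2 := by
          rw [Finset.card_sdiff_of_subset hsubset]
          omega
        obtain ⟨t, ht⟩ := hev
        exact ⟨t + 1, by omega⟩
  simpa using key Finset.univ (by simp)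

variable {V : Type*} {G : MixedGraph V}

/-- Given an injective all-arc circular sequence and a closing step (arc or edge)
from `vert i` back to `vert j`, build a mixed cycle of length `(i-j).val + 1`. -/
lemma portion_cycle {L : ℕ} [NeZero L] (vert : ZMod L → V)
    (hinj : Function.Injective vert)
    (harc : ∀ k, G.Arc (vert k) (vert (k + 1)))
    (i j : ZMod L) (hij : i ≠ j) (b : Bool)
    (hlast : if b = true then G.Arc (vert i) (vert j) else G.Edge (vert i) (vert j)) :
    ∃ c : MixedCycle G, c.len = (i - j).val + 1 ∧
      (b = true → (∀ t, c.useArc t = true) ∧ Function.Injective c.vert) := by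
  set d := (i - j).val with hd
  have hij0 : i - j ≠ 0 := sub_ne_zero.mpr hij
  have hdpos : 0 < d := by
    rcases Nat.eq_zero_or_pos d with h | h
    · exact absurd ((ZMod.val_eq_zero _).mp h) hij0
    · exact h
  have hdlt : d < L := ZMod.val_lt _
  have hcast : ((d : ℕ) : ZMod L) = i - j := ZMod.natCast_rightInverse _
  haveI : NeZero (d + 1) := ⟨Nat.succ_ne_zero d⟩
  set vert' : ZMod (d + 1) → V := fun k => vert (j + (k.val : ZMod L)) with hvert'
  have hvlt : ∀ k : ZMod (d + 1), k.val < d + 1 := fun k => ZMod.val_lt k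
  have hvinj : Function.Injective vert' := by
    intro k1 k2 h
    have h1 : (k1.val : ZMod L) = (k2.val : ZMod L) := by
      have := hinj h
      exact add_left_cancel this
    have := val_cast_inj (lt_of_lt_of_le (hvlt k1) hdlt) (lt_of_lt_of_le (hvlt k2) hdlt) h1
    exact ZMod.val_injective _ this
  have hvald : ∀ k : ZMod (d + 1), k.val = d → vert' k = vert i ∧ vert' (k + 1) = vert j := by
    intro k hk
    constructor
    · show vert (j + (k.val : ZMod L)) = vert i
      rw [hk, hcast]
      congr 1
      ring
    · show vert (j + ((k + 1).val : ZMod L)) = vert j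
      rw [zmod_succ_val, hk, Nat.mod_self]
      simp
  have hvals : ∀ k : ZMod (d + 1), k.val < d →
      vert' k = vert (j + (k.val : ZMod L)) ∧ vert' (k + 1) = vert ((j + (k.val : ZMod L)) + 1) := by
    intro k hk
    refine ⟨rfl, ?_⟩
    show vert (j + ((k + 1).val : ZMod L)) = vert ((j + (k.val : ZMod L)) + 1)
    rw [zmod_succ_val, Nat.mod_eq_of_lt (by omega)]
    congr 1
    push_cast
    ring
  refine ⟨{ len := d + 1
            len_pos := Nat.succ_pos d
            vert := vert'
            useArc := fun k => if k.val = d then b else true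
            step_arc := ?_
            step_edge := ?_
            arc_once := ?_
            edge_once := ?_ }, rfl, ?_⟩
  · intro k hk
    by_cases h : k.val = d
    · have hb : b = true := by simpa [h] using hk
      obtain ⟨e1, e2⟩ := hvald k h
      rw [e1, e2]
      rw [hb] at hlast
      simpa using hlast
    · obtain ⟨e1, e2⟩ := hvals k (by have := hvlt k; omega)
      rw [e1, e2]
      exact harc _
  · intro k hk
    by_cases h : k.val = d
    · have hb : b = false := by simpa [h] using hk
      obtain ⟨e1, e2⟩ := hvald k h
      rw [e1, e2]
      rw [hb] at hlast
      simpa using hlast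
    · simp [h] at hk
  · intro k1 k2 _ _ hv _
    exact hvinj hv
  · intro k1 k2 h1 h2 _
    have e1 : k1.val = d := by by_contra h; simp [h] at h1
    have e2 : k2.val = d := by by_contra h; simp [h] at h2
    exact ZMod.val_injective _ (e1.trans e2.symm)
  · intro hb
    refine ⟨fun t => ?_, hvinj⟩
    by_cases h : t.val = d <;> simp [h, hb]

/-- A finite mixed graph with an out-neighbor selection has an injective all-arc cycle. -/
lemma exists_allArc_cycle [Finite V] (v0 : V) (f : V → V) (hf : ∀ v, G.Arc v (f v)) :
    ∃ c : MixedCycle G, (∀ t, c.useArc t = true) ∧ Function.Injective c.vert := by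
  classical
  obtain ⟨a, b, hne, hab⟩ := Finite.exists_ne_map_eq_of_infinite (fun n : ℕ => f^[n] v0)
  wlog hlt : a < b generalizing a b
  · exact this b a hne.symm hab.symm (by omega)
  have hper0 : f^[b - a] (f^[a] v0) = f^[a] v0 := by
    rw [← Function.iterate_add_apply]
    have : b - a + a = b := by omega
    rw [this, hab]
  set x := f^[a] v0 with hx
  have hP : ∃ p, 0 < p ∧ f^[p] x = x := ⟨b - a, by omega, hper0⟩
  set p := Nat.find hP with hp
  obtain ⟨hppos, hpx⟩ : 0 < p ∧ f^[p] x = x := Nat.find_spec hP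
  haveI : NeZero p := ⟨hppos.ne'⟩
  have hper : Function.IsPeriodicPt f p x := hpx
  have hiterinj : ∀ s t : ℕ, s < t → t < p → f^[s] x ≠ f^[t] x := by
    intro s t hst htp heq
    have : f^[p - t + s] x = x := by
      rw [Function.iterate_add_apply, heq, ← Function.iterate_add_apply]
      have : p - t + t = p := by omega
      rw [this]
      exact hpx
    have hcon : 0 < p - t + s ∧ f^[p - t + s] x = x := ⟨by omega, this⟩
    exact Nat.find_min hP (by omega) hcon
  set vert : ZMod p → V := fun k => f^[k.val] x with hvert
  have hstep : ∀ k : ZMod p, vert (k + 1) = f (vert k) := by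
    intro k
    show f^[(k + 1).val] x = f (f^[k.val] x)
    rw [zmod_succ_val, hper.iterate_mod_apply, Function.iterate_succ_apply']
  have hinj : Function.Injective vert := by
    intro k1 k2 h
    rcases Nat.lt_trichotomy k1.val k2.val with hc | hc | hc
    · exact absurd h (hiterinj _ _ hc (ZMod.val_lt _))
    · exact ZMod.val_injective _ hc
    · exact absurd h.symm (hiterinj _ _ hc (ZMod.val_lt _))
  refine ⟨{ len := p
            len_pos := hppos
            vert := vert
            useArc := fun _ => true
            step_arc := fun k _ => by rw [hstep]; exact hf _
            step_edge := fun k hk => by simp at hk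
            arc_once := fun k1 k2 _ _ hv _ => hinj hv
            edge_once := fun k1 k2 h1 _ _ => by simp at h1 }, fun _ => rfl, hinj⟩

lemma construction (g : ℕ) (hg : 5 ≤ g) :
    ∃ (W : Type) (_ : Fintype W) (G : MixedGraph W),
      Nat.card W = 2 * g ∧ IsMixedRZG G 1 2 g := by
  haveI : NeZero g := ⟨by omega⟩
  have hone : (1 : ZMod g) ≠ 0 := by
    intro h
    rw [← Nat.cast_one, ZMod.natCast_eq_zero_iff] at h
    have := Nat.le_of_dvd one_pos h
    omega
  classical
  refine ⟨ZMod g × Bool, inferInstance,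
    { Edge := fun u v => u.1 = v.1 ∧ u.2 ≠ v.2
      Arc := fun u v => v.1 = u.1 + 1
      edge_symm := fun h => ⟨h.1.symm, Ne.symm h.2⟩
      edge_irrefl := fun v h => h.2 rfl
      arc_irrefl := fun v h => hone (by linear_combination -h) }, ?_, ?_, ?_, ?_, ?_⟩
  · rw [Nat.card_eq_fintype_card, Fintype.card_prod, ZMod.card, Fintype.card_bool]
    ring
  · -- edge degree 1
    intro v
    obtain ⟨v1, v2⟩ := v
    have hset : {u : ZMod g × Bool | (v1, v2).1 = u.1 ∧ (v1, v2).2 ≠ u.2} = {(v1, !v2)} := by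
      ext ⟨u1, u2⟩
      simp only [Set.mem_setOf_eq, Set.mem_singleton_iff, Prod.mk.injEq]
      constructor
      · rintro ⟨h1, h2⟩
        exact ⟨h1.symm, by cases u2 <;> cases v2 <;> simp_all⟩
      · rintro ⟨h1, h2⟩
        subst h1; subst h2
        exact ⟨rfl, by cases v2 <;> simp⟩
    rw [Nat.card_coe_set_eq, hset, Set.ncard_singleton]
  · -- arc degree 2
    intro v
    have hset : {u : ZMod g × Bool | u.1 = v.1 + 1} = {(v.1 + 1, true), (v.1 + 1, false)} := by
      ext ⟨u1, u2⟩
      simp only [Set.mem_setOf_eq, Set.mem_insert_iff, Set.mem_singleton_iff, Prod.mk.injEq]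
      constructor
      · rintro rfl
        cases u2 <;> simp
      · rintro (⟨rfl, rfl⟩ | ⟨rfl, rfl⟩) <;> rfl
    rw [Nat.card_coe_set_eq, hset, Set.ncard_pair (by simp)]
  · -- existence of cycle of length g
    exact ⟨{ len := g
             len_pos := by omega
             vert := fun k => (k, false)
             useArc := fun _ => true
             step_arc := fun k _ => rfl
             step_edge := fun k hk => by simp at hk
             arc_once := fun k1 k2 _ _ hv _ => congrArg Prod.fst hv
             edge_once := fun k1 k2 h1 _ _ => by simp at h1 }, rfl⟩
  · -- every cycle has length ≥ g
    intro c
    haveI : NeZero c.len := ⟨c.len_pos.ne'⟩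
    set F : ZMod c.len → ZMod g := fun k => (c.vert k).1 with hF
    have hstep : ∀ k, F (k + 1) = F k + (if c.useArc k = true then 1 else 0) := by
      intro k
      cases h : c.useArc k
      · simpa using ((c.step_edge k h).1).symm
      · simpa using c.step_arc k h
    have h2 : (∑ k : ZMod c.len, F (k + 1)) = ∑ k, F k := by
      have := Equiv.sum_comp (Equiv.addRight (1 : ZMod c.len)) F
      simpa [Equiv.addRight] using this
    have h1 : (∑ k : ZMod c.len, F (k + 1)) =
        (∑ k, F k) + ∑ k, (if c.useArc k = true then (1 : ZMod g) else 0) := by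
      rw [← Finset.sum_add_distrib]
      exact Finset.sum_congr rfl fun k _ => hstep k
    have h3 : (∑ k : ZMod c.len, (if c.useArc k = true then (1 : ZMod g) else 0)) = 0 := by
      have h4 := h1.symm.trans h2
      exact add_eq_left.mp h4
    rw [Finset.sum_boole] at h3
    set A := (Finset.univ.filter fun k : ZMod c.len => c.useArc k = true).card with hA
    have hdvd : g ∣ A := (ZMod.natCast_eq_zero_iff A g).mp h3
    rcases Nat.eq_zero_or_pos A with hA0 | hApos
    · -- all steps are edges: contradiction
      exfalso
      have hall : ∀ k : ZMod c.len, c.useArc k = false := by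
        intro k
        by_contra h
        have hk : c.useArc k = true := by
          cases hcu : c.useArc k
          · exact absurd hcu h
          · rfl
        have hmem : k ∈ Finset.univ.filter fun k : ZMod c.len => c.useArc k = true := by
          simp [hk]
        have hc0 : (Finset.univ.filter fun k : ZMod c.len => c.useArc k = true).card = 0 := by
          rw [← hA]; exact hA0
        have hemp := Finset.card_eq_zero.mp hc0
        rw [hemp] at hmem
        simp at hmem
      rcases Nat.lt_or_ge c.len 2 with hlen | hlen
      · -- len = 1
        have hlen1 : c.len = 1 := by have := c.len_pos; omega
        have e0 := c.step_edge 0 (hall 0)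
        haveI hss : Subsingleton (ZMod c.len) := by rw [hlen1]; infer_instance
        have : c.vert (0 + 1) = c.vert 0 := by
          congr 1
          exact Subsingleton.elim _ _
        rw [this] at e0
        exact e0.2 rfl
      · -- len ≥ 2
        have h01 : (0 : ZMod c.len) ≠ 1 := by
          intro h
          have hh : ((1 : ℕ) : ZMod c.len) = 0 := by exact_mod_cast h.symm
          rw [ZMod.natCast_eq_zero_iff] at hh
          have := Nat.le_of_dvd one_pos hh
          omega
        have e0 := c.step_edge 0 (hall 0)
        have e1 := c.step_edge 1 (hall 1)
        have hv2 : c.vert 0 = c.vert (1 + 1) := by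
          have hz : (0 : ZMod c.len) + 1 = 1 := by rw [zero_add]
          rw [hz] at e0
          have hfst : (c.vert 0).1 = (c.vert (1 + 1)).1 := by
            rw [e0.1, e1.1]
          have hsnd : (c.vert 0).2 = (c.vert (1 + 1)).2 := by
            have a1 := e0.2
            have a2 := e1.2
            have hbool : ∀ x y z : Bool, x ≠ y → y ≠ z → x = z := by decide
            exact hbool _ _ _ a1 a2
          exact Prod.ext hfst hsnd
        have := c.edge_once 0 1 (hall 0) (hall 1) (Or.inr ⟨hv2, by rw [zero_add]⟩)
        exact h01 this
    · have hgA : g ≤ A := Nat.le_of_dvd hApos hdvd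
      have hAle : A ≤ c.len := by
        have := Finset.card_filter_le Finset.univ fun k : ZMod c.len => c.useArc k = true
        rwa [Finset.card_univ, ZMod.card] at this
      omega

lemma lower_bound {g : ℕ} (hg : 5 ≤ g) {V : Type} [Fintype V] (G : MixedGraph V)
    (hG : IsMixedRZG G 1 2 g) : 2 * g ≤ Nat.card V := by
  classical
  obtain ⟨h1, h2, hgirth⟩ := hG
  have hm : ∀ v : V, ∃ u, G.Edge v u ∧ ∀ w, G.Edge v w → w = u := by
    intro v
    obtain ⟨hsub, hne⟩ := (Nat.card_eq_one_iff_unique).mp (h1 v)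
    obtain ⟨⟨u, hu⟩⟩ := hne
    refine ⟨u, hu, fun w hw => ?_⟩
    have : (⟨w, hw⟩ : {u | G.Edge v u}) = ⟨u, hu⟩ := Subsingleton.elim _ _
    exact congrArg Subtype.val this
  choose m hm1 hm2 using hm
  have hminv : ∀ v, m (m v) = v := fun v => (hm2 (m v) v (G.edge_symm (hm1 v))).symm
  have hmne : ∀ v, m v ≠ v := by
    intro v h
    have := hm1 v
    rw [h] at this
    exact G.edge_irrefl v this
  have hminj : Function.Injective m := fun a b h => by
    rw [← hminv a, h, hminv]
  have hfex : ∀ v : V, ∃ u, G.Arc v u := by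
    intro v
    have hpos : 0 < Nat.card {u | G.Arc v u} := by rw [h2 v]; omega
    obtain ⟨⟨u, hu⟩⟩ := (Nat.card_pos_iff.mp hpos).1
    exact ⟨u, hu⟩
  choose f hf using hfex
  obtain ⟨c0, hc0⟩ := hgirth.1
  haveI : NeZero c0.len := ⟨c0.len_pos.ne'⟩
  have hP : ∃ l, ∃ c : MixedCycle G,
      (∀ t, c.useArc t = true) ∧ Function.Injective c.vert ∧ c.len = l := by
    obtain ⟨c, hca, hci⟩ := exists_allArc_cycle (G := G) (c0.vert 0) f hf
    exact ⟨c.len, c, hca, hci, rfl⟩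
  obtain ⟨C, hCarc, hCinj, hClen⟩ := Nat.find_spec hP
  have hCmin : ∀ c : MixedCycle G, (∀ t, c.useArc t = true) →
      Function.Injective c.vert → C.len ≤ c.len := by
    intro c hc1 hc2
    rw [hClen]
    exact Nat.find_min' hP ⟨c, hc1, hc2, rfl⟩
  haveI : NeZero C.len := ⟨C.len_pos.ne'⟩
  have hgC : g ≤ C.len := hgirth.2 C
  have harcC : ∀ k : ZMod C.len, G.Arc (C.vert k) (C.vert (k + 1)) :=
    fun k => C.step_arc k (hCarc k)
  have chord : ∀ i j : ZMod C.len, G.Arc (C.vert i) (C.vert j) → j = i + 1 := by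
    intro i j harc
    have hij : i ≠ j := by
      rintro rfl
      exact G.arc_irrefl _ harc
    obtain ⟨c, hclen, hprop⟩ :=
      portion_cycle C.vert hCinj harcC i j hij true (by simpa using harc)
    obtain ⟨hca, hci⟩ := hprop rfl
    have hle := hCmin c hca hci
    rw [hclen] at hle
    have hlt : (i - j).val < C.len := ZMod.val_lt _
    have heq : (i - j).val = C.len - 1 := by omega
    have hij2 : i - j = ((C.len - 1 : ℕ) : ZMod C.len) := by
      conv_lhs => rw [← ZMod.natCast_rightInverse (i - j)]
      rw [heq]
    have hneg : ((C.len - 1 : ℕ) : ZMod C.len) = -1 := by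
      have h1' : (1 : ℕ) ≤ C.len := C.len_pos
      push_cast [Nat.cast_sub h1']
      simp
    rw [hneg] at hij2
    linear_combination -hij2
  have onEdge : ∀ i j : ZMod C.len, G.Edge (C.vert i) (C.vert j) → 2 * g ≤ C.len + 2 := by
    intro i j hedge
    have hij : i ≠ j := by
      rintro rfl
      exact G.edge_irrefl _ hedge
    obtain ⟨c1, hclen1, -⟩ :=
      portion_cycle C.vert hCinj harcC i j hij false (by simpa using hedge)
    obtain ⟨c2, hclen2, -⟩ :=
      portion_cycle C.vert hCinj harcC j i (Ne.symm hij) false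
        (by simpa using G.edge_symm hedge)
    have hg1 : g ≤ (i - j).val + 1 := hclen1 ▸ hgirth.2 c1
    have hg2 : g ≤ (j - i).val + 1 := hclen2 ▸ hgirth.2 c2
    have hij0 : i - j ≠ 0 := sub_ne_zero.mpr hij
    have hsum : (j - i).val = C.len - (i - j).val := by
      have hsw : j - i = -(i - j) := by ring
      rw [hsw, ZMod.neg_val, if_neg hij0]
    have hlt := ZMod.val_lt (i - j)
    have hvpos : 0 < (i - j).val := by
      rcases Nat.eq_zero_or_pos ((i - j).val) with h | h
      · exact absurd ((ZMod.val_eq_zero _).mp h) hij0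
      · exact h
    omega
  rw [Nat.card_eq_fintype_card]
  set n := Fintype.card V with hn
  have hneven : Even n := even_card_of_involutive m hminv hmne
  set R : Finset V := Finset.univ.image C.vert with hR
  have hRcard : R.card = C.len := by
    rw [hR, Finset.card_image_of_injective _ hCinj, Finset.card_univ, ZMod.card]
  have hRn : C.len ≤ n := by
    rw [← hRcard]
    exact Finset.card_le_univ R
  set T : Finset (ZMod C.len) := Finset.univ.filter (fun i => m (C.vert i) ∉ R) with hT
  have hTcard : C.len + T.card ≤ n := by
    have himg : (T.image fun i => m (C.vert i)) ⊆ Rᶜ := by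
      intro x hx
      simp only [Finset.mem_image] at hx
      obtain ⟨i, hi, rfl⟩ := hx
      rw [hT] at hi
      rw [Finset.mem_compl]
      exact (Finset.mem_filter.mp hi).2
    have hinj2 : Set.InjOn (fun i => m (C.vert i)) T := fun a _ b _ h => hCinj (hminj h)
    have h5 : T.card = (T.image fun i => m (C.vert i)).card :=
      (Finset.card_image_of_injOn hinj2).symm
    have h6 := Finset.card_le_card himg
    rw [Finset.card_compl, hRcard] at h6
    omega
  by_cases hallOff : ∀ i : ZMod C.len, m (C.vert i) ∉ R
  · have hTuniv : T = Finset.univ := by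
      rw [hT]
      exact Finset.filter_true_of_mem (fun i _ => hallOff i)
    rw [hTuniv, Finset.card_univ, ZMod.card] at hTcard
    omega
  · push_neg at hallOff
    obtain ⟨i, hi⟩ := hallOff
    rw [hR] at hi
    obtain ⟨j, -, hj⟩ := Finset.mem_image.mp hi
    have hedge : G.Edge (C.vert i) (C.vert j) := by
      rw [hj]
      exact hm1 _
    have hL2 : 2 * g ≤ C.len + 2 := onEdge i j hedge
    by_contra hcon
    push_neg at hcon
    obtain ⟨t, ht⟩ := hneven
    have hLeq : C.len = n := by omega
    have hbij : Function.Bijective C.vert := by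
      rw [Fintype.bijective_iff_injective_and_card]
      exact ⟨hCinj, by rw [ZMod.card]; exact hLeq⟩
    obtain ⟨x, y, hxy, -⟩ := Nat.card_eq_two_iff.mp (h2 (C.vert 0))
    obtain ⟨jx, hjx⟩ := hbij.2 x.val
    obtain ⟨jy, hjy⟩ := hbij.2 y.val
    have hax : G.Arc (C.vert 0) (C.vert jx) := by rw [hjx]; exact x.prop
    have hay : G.Arc (C.vert 0) (C.vert jy) := by rw [hjy]; exact y.prop
    have e1 := chord 0 jx hax
    have e2 := chord 0 jy hay
    apply hxy
    apply Subtype.ext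
    rw [← hjx, ← hjy, e1, e2]

/-- `f(1,2,g) = 2g` for every `g ≥ 5`. -/
theorem f_1_2_g (g : ℕ) (hg : 5 ≤ g) :
    (∃ (V : Type) (_ : Fintype V) (G : MixedGraph V),
      Nat.card V = 2 * g ∧ IsMixedRZG G 1 2 g) ∧
    (∀ (V : Type) [Fintype V] (G : MixedGraph V),
      IsMixedRZG G 1 2 g → 2 * g ≤ Nat.card V) := by
  exact ⟨construction g hg, fun V _ G hG => lower_bound hg G hG⟩
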